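/- arXiv:2604.24016 — 3 statements merged into one kernel-verified Lean document; each statement's English description precedes it below -/
import Mathlib

section
/- Let d ≥ 1; let A be a symmetric positive semidefinite d×d real matrix, and let G and M be symmetric positive definite d×d real matrices. Let b, θ_*, θ†, θ̂_off, x ∈ ℝ^d and γ, β, ρ ≥ 0. Assume ‖b − Aθ_*‖_{(A+G)⁻¹} ≤ γ, ‖θ̂_off − θ†‖_G ≤ β, and ‖θ_* − θ†‖_M ≤ ρ. Define the pooled estimator θ̂ := (A+G)⁻¹(b + G θ̂_off). Then |x^⊤(θ̂ − θ_*)| ≤ (γ + β)·‖x‖_{(A+G)⁻¹} + ρ·‖M^{−1/2} G (A+G)⁻¹ x‖₂, where ‖·‖₂ is the Euclidean norm and M^{−1/2} is the inverse of the positive definite square root of M. -/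
open Matrix

/-- The `H`-induced (semi)norm `‖v‖_H := √(vᵀ H v)`. -/
noncomputable def mnorm {d : ℕ} (H : Matrix (Fin d) (Fin d) ℝ) (v : Fin d → ℝ) : ℝ :=
  Real.sqrt (v ⬝ᵥ H.mulVec v)

/-- The Euclidean norm of a vector in `ℝ^d`. -/
noncomputable def euclNorm {d : ℕ} (v : Fin d → ℝ) : ℝ :=
  Real.sqrt (v ⬝ᵥ v)

/-- The square root of a positive semidefinite matrix, as `Matrix.PosSemidef.sqrt` was defined
in the older Mathlib (removed since). -/
noncomputable def posSemidefSqrt {n : Type*} [Fintype n] [DecidableEq n]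
    {A : Matrix n n ℝ} (hA : A.PosSemidef) : Matrix n n ℝ :=
  (hA.1.eigenvectorUnitary : Matrix n n ℝ) * diagonal ((↑) ∘ Real.sqrt ∘ hA.1.eigenvalues) *
    (star (hA.1.eigenvectorUnitary : Matrix n n ℝ))

/-!
The error splits as `θ̂ - θ_* = (A + G)⁻¹ ((b - A θ_*) + G (θ̂_off - θ†) + G (θ† - θ_*))`,
since `(A + G) θ_* = A θ_* + G θ† + G (θ_* - θ†)`. Paired with `x`, each of the three terms is
bounded by Cauchy–Schwarz in its own geometry: the online noise in `(A + G)⁻¹`; the offline error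
in `G`, where `‖(A + G)⁻¹ x‖_G ≤ ‖x‖_{(A + G)⁻¹}` because `G ≤ A + G`; and the bias in `M`, whose
dual norm is `‖M^{-1/2} ·‖₂`.
-/

namespace Matrix

variable {n R : Type*} [Fintype n]

lemma IsSymm.dotProduct_mulVec_comm [CommSemiring R] {S : Matrix n n R} (hS : S.IsSymm)
    (v w : n → R) : v ⬝ᵥ (S *ᵥ w) = (S *ᵥ v) ⬝ᵥ w := by
  rw [dotProduct_mulVec, ← mulVec_transpose, hS.eq]

omit [Fintype n] in
lemma PosSemidef.isSymm {S : Matrix n n ℝ} (hS : S.PosSemidef) : S.IsSymm :=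
  isHermitian_iff_isSymm.mp hS.isHermitian

lemma dotProduct_pooled_error_eq [DecidableEq n] [CommRing R] {A G : Matrix n n R}
    (hA : A.IsSymm) (hG : G.IsSymm) (hAG : IsUnit (A + G).det) (b θ θ' θₒ x : n → R) :
    x ⬝ᵥ ((A + G)⁻¹ *ᵥ (b + G *ᵥ θₒ) - θ) =
      x ⬝ᵥ ((A + G)⁻¹ *ᵥ (b - A *ᵥ θ)) + ((A + G)⁻¹ *ᵥ x) ⬝ᵥ (G *ᵥ (θₒ - θ')) +
        (G *ᵥ (A + G)⁻¹ *ᵥ x) ⬝ᵥ (θ' - θ) := by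
  have hP : (A + G)⁻¹.IsSymm := (hA.add hG).inv
  have hθ : θ = (A + G)⁻¹ *ᵥ ((A + G) *ᵥ θ) := by
    rw [mulVec_mulVec, nonsing_inv_mul _ hAG, one_mulVec]
  rw [add_assoc, hG.dotProduct_mulVec_comm, ← dotProduct_add, ← hG.dotProduct_mulVec_comm,
    ← hP.dotProduct_mulVec_comm, ← dotProduct_add, ← mulVec_add]
  conv_lhs => rw [hθ, ← mulVec_sub]
  congr 2
  rw [sub_add_sub_cancel, mulVec_sub, add_mulVec]
  abel

end Matrix

section PosSemidefSqrt

variable {n : Type*} [Fintype n] [DecidableEq n] {A : Matrix n n ℝ}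

lemma posSemidefSqrt_isSymm (hA : A.PosSemidef) : (posSemidefSqrt hA).IsSymm := by
  rw [← isHermitian_iff_isSymm]
  simp [posSemidefSqrt, IsHermitian, star_eq_conjTranspose, Matrix.mul_assoc]

lemma posSemidefSqrt_mul_self (hA : A.PosSemidef) : posSemidefSqrt hA * posSemidefSqrt hA = A := by
  set U : Matrix n n ℝ := ↑hA.1.eigenvectorUnitary
  set D := diagonal ((↑) ∘ Real.sqrt ∘ hA.1.eigenvalues : n → ℝ)
  have hD : D * D = diagonal ((↑) ∘ hA.1.eigenvalues) := by
    rw [diagonal_mul_diagonal]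
    congr 1
    funext i
    simp [Real.mul_self_sqrt (hA.eigenvalues_nonneg i)]
  calc U * D * star U * (U * D * star U) = U * (D * (star U * U) * D) * star U := by
        simp only [Matrix.mul_assoc]
    _ = A := by
        rw [UnitaryGroup.star_mul_self, Matrix.mul_one, hD]
        conv_rhs => rw [hA.1.spectral_theorem, Unitary.conjStarAlgAut_apply]
        rfl

lemma dotProduct_mulVec_eq_posSemidefSqrt (hA : A.PosSemidef) (v w : n → ℝ) :
    v ⬝ᵥ (A *ᵥ w) = (posSemidefSqrt hA *ᵥ v) ⬝ᵥ (posSemidefSqrt hA *ᵥ w) := by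
  rw [← (posSemidefSqrt_isSymm hA).dotProduct_mulVec_comm, mulVec_mulVec,
    posSemidefSqrt_mul_self]

lemma isUnit_det_posSemidefSqrt (hA : A.PosDef) : IsUnit (posSemidefSqrt hA.posSemidef).det := by
  have hsq : (posSemidefSqrt hA.posSemidef).det ^ 2 = A.det := by
    rw [sq, ← det_mul, posSemidefSqrt_mul_self]
  exact (pow_ne_zero_iff two_ne_zero).mp (hsq ▸ hA.det_pos.ne') |>.isUnit

end PosSemidefSqrt

section Norms

variable {d : ℕ}

lemma mnorm_nonneg (H : Matrix (Fin d) (Fin d) ℝ) (v : Fin d → ℝ) : 0 ≤ mnorm H v :=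
  Real.sqrt_nonneg _

lemma mnorm_sub_comm (H : Matrix (Fin d) (Fin d) ℝ) (v w : Fin d → ℝ) :
    mnorm H (v - w) = mnorm H (w - v) := by
  rw [mnorm, mnorm, ← neg_sub, mulVec_neg, dotProduct_neg, neg_dotProduct, neg_neg]

lemma abs_dotProduct_le_euclNorm_mul_euclNorm (v w : Fin d → ℝ) :
    |v ⬝ᵥ w| ≤ euclNorm v * euclNorm w := by
  have hsq : (v ⬝ᵥ w) ^ 2 ≤ (v ⬝ᵥ v) * (w ⬝ᵥ w) := by
    simpa only [dotProduct, sq] using Finset.sum_mul_sq_le_sq_mul_sq Finset.univ v w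
  have hv : 0 ≤ v ⬝ᵥ v := Finset.sum_nonneg fun i _ ↦ mul_self_nonneg (v i)
  rw [← Real.sqrt_sq_eq_abs, euclNorm, euclNorm, ← Real.sqrt_mul hv]
  exact Real.sqrt_le_sqrt hsq

lemma mnorm_eq_euclNorm_posSemidefSqrt_mulVec {H : Matrix (Fin d) (Fin d) ℝ}
    (hH : H.PosSemidef) (v : Fin d → ℝ) : mnorm H v = euclNorm (posSemidefSqrt hH *ᵥ v) := by
  rw [mnorm, euclNorm, dotProduct_mulVec_eq_posSemidefSqrt hH]

lemma abs_dotProduct_mulVec_le_mnorm_mul_mnorm {H : Matrix (Fin d) (Fin d) ℝ}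
    (hH : H.PosSemidef) (v w : Fin d → ℝ) : |v ⬝ᵥ (H *ᵥ w)| ≤ mnorm H v * mnorm H w := by
  rw [dotProduct_mulVec_eq_posSemidefSqrt hH, mnorm_eq_euclNorm_posSemidefSqrt_mulVec hH,
    mnorm_eq_euclNorm_posSemidefSqrt_mulVec hH]
  exact abs_dotProduct_le_euclNorm_mul_euclNorm _ _

lemma abs_dotProduct_le_euclNorm_inv_sqrt_mul_mnorm {M : Matrix (Fin d) (Fin d) ℝ}
    (hM : M.PosDef) (z v : Fin d → ℝ) :
    |z ⬝ᵥ v| ≤ euclNorm ((posSemidefSqrt hM.posSemidef)⁻¹ *ᵥ z) * mnorm M v := by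
  set S := posSemidefSqrt hM.posSemidef
  have hz : z ⬝ᵥ v = (S⁻¹ *ᵥ z) ⬝ᵥ (S *ᵥ v) := by
    rw [← (posSemidefSqrt_isSymm hM.posSemidef).inv.dotProduct_mulVec_comm, mulVec_mulVec,
      nonsing_inv_mul _ (isUnit_det_posSemidefSqrt hM), one_mulVec]
  rw [hz, mnorm_eq_euclNorm_posSemidefSqrt_mulVec hM.posSemidef]
  exact abs_dotProduct_le_euclNorm_mul_euclNorm _ _

lemma mnorm_mulVec_add_inv_le {A G : Matrix (Fin d) (Fin d) ℝ} (hA : A.PosSemidef)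
    (hG : G.IsSymm) (hAG : IsUnit (A + G).det) (x : Fin d → ℝ) :
    mnorm G ((A + G)⁻¹ *ᵥ x) ≤ mnorm (A + G)⁻¹ x := by
  set y := (A + G)⁻¹ *ᵥ x
  have hy : x ⬝ᵥ ((A + G)⁻¹ *ᵥ x) = y ⬝ᵥ (A *ᵥ y) + y ⬝ᵥ (G *ᵥ y) := by
    rw [← dotProduct_add, ← add_mulVec, mulVec_mulVec, mul_nonsing_inv _ hAG, one_mulVec,
      ← (hA.isSymm.add hG).inv.dotProduct_mulVec_comm, dotProduct_comm]
  rw [mnorm, mnorm, hy]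
  exact Real.sqrt_le_sqrt (le_add_of_nonneg_left (hA.dotProduct_mulVec_nonneg y))

end Norms

theorem stmt_3_general {d : ℕ}
    (A G M : Matrix (Fin d) (Fin d) ℝ)
    (hA : A.PosSemidef) (hG : G.PosDef) (hM : M.PosDef)
    (b θstar θdag θoff x : Fin d → ℝ) (γ β ρ : ℝ)
    (h1 : mnorm (A + G)⁻¹ (b - A.mulVec θstar) ≤ γ)
    (h2 : mnorm G (θoff - θdag) ≤ β)
    (h3 : mnorm M (θstar - θdag) ≤ ρ) :
    |x ⬝ᵥ ((A + G)⁻¹.mulVec (b + G.mulVec θoff) - θstar)| ≤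
      (γ + β) * mnorm (A + G)⁻¹ x +
        ρ * euclNorm ((posSemidefSqrt hM.posSemidef)⁻¹.mulVec (G.mulVec ((A + G)⁻¹.mulVec x))) := by
  have hAG : (A + G).PosDef := PosDef.posSemidef_add hA hG
  have hdet : IsUnit (A + G).det := (isUnit_iff_isUnit_det _).mp hAG.isUnit
  rw [dotProduct_pooled_error_eq hA.isSymm hG.posSemidef.isSymm hdet _ _ θdag]
  have online : |x ⬝ᵥ ((A + G)⁻¹ *ᵥ (b - A *ᵥ θstar))| ≤ mnorm (A + G)⁻¹ x * γ :=
    (abs_dotProduct_mulVec_le_mnorm_mul_mnorm hAG.inv.posSemidef _ _).trans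
      (mul_le_mul_of_nonneg_left h1 (mnorm_nonneg _ _))
  have offline : |((A + G)⁻¹ *ᵥ x) ⬝ᵥ (G *ᵥ (θoff - θdag))| ≤ mnorm (A + G)⁻¹ x * β :=
    (abs_dotProduct_mulVec_le_mnorm_mul_mnorm hG.posSemidef _ _).trans
      (mul_le_mul (mnorm_mulVec_add_inv_le hA hG.posSemidef.isSymm hdet x) h2
        (mnorm_nonneg _ _) (mnorm_nonneg _ _))
  have bias : |(G *ᵥ (A + G)⁻¹ *ᵥ x) ⬝ᵥ (θdag - θstar)| ≤
      euclNorm ((posSemidefSqrt hM.posSemidef)⁻¹ *ᵥ G *ᵥ (A + G)⁻¹ *ᵥ x) * ρ :=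
    (abs_dotProduct_le_euclNorm_inv_sqrt_mul_mnorm hM _ _).trans
      (mul_le_mul_of_nonneg_left (mnorm_sub_comm M θdag θstar ▸ h3) (Real.sqrt_nonneg _))
  linarith [abs_add_three (x ⬝ᵥ ((A + G)⁻¹ *ᵥ (b - A *ᵥ θstar)))
    (((A + G)⁻¹ *ᵥ x) ⬝ᵥ (G *ᵥ (θoff - θdag))) ((G *ᵥ (A + G)⁻¹ *ᵥ x) ⬝ᵥ (θdag - θstar))]

/-- Deterministic validity of the pooled branch: with
`θ̂ := (A+G)⁻¹(b + Gθ̂_off)`, under the three stated normed hypotheses,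
`|xᵀ(θ̂ − θ_*)| ≤ (γ+β)‖x‖_{(A+G)⁻¹} + ρ‖M^{-1/2} G (A+G)⁻¹ x‖₂`. -/
theorem stmt_3 {d : ℕ} (hd : 1 ≤ d)
    (A G M : Matrix (Fin d) (Fin d) ℝ)
    (hA : A.PosSemidef) (hG : G.PosDef) (hM : M.PosDef)
    (b θstar θdag θoff x : Fin d → ℝ) (γ β ρ : ℝ)
    (hγ : 0 ≤ γ) (hβ : 0 ≤ β) (hρ : 0 ≤ ρ)
    (h1 : mnorm (A + G)⁻¹ (b - A.mulVec θstar) ≤ γ)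
    (h2 : mnorm G (θoff - θdag) ≤ β)
    (h3 : mnorm M (θstar - θdag) ≤ ρ) :
    |x ⬝ᵥ ((A + G)⁻¹.mulVec (b + G.mulVec θoff) - θstar)| ≤
      (γ + β) * mnorm (A + G)⁻¹ x +
        ρ * euclNorm ((posSemidefSqrt hM.posSemidef)⁻¹.mulVec (G.mulVec ((A + G)⁻¹.mulVec x))) :=
  stmt_3_general A G M hA hG hM b θstar θdag θoff x γ β ρ h1 h2 h3
end

section
/- Let d ≥ 1, n ≥ 1, and let x_1, …, x_n ∈ ℝ^d satisfy ‖x_j‖₂ ≤ 1 for all j. Define V_0 := I and V_j := V_{j−1} + x_j x_j^⊤ for 1 ≤ j ≤ n. Then Σ_{j=1}^n min{1, x_j^⊤ V_{j−1}^{−1} x_j} ≤ 2 log det(V_n) ≤ 2 d log(1 + n). -/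
open Matrix

/-- The design (Gram) matrix after `j` rounds with base matrix `G0`:
`G0 + Σ_{i<j} x_i x_iᵀ` (0-indexed, so this is `V_{j}` with `V_0 = G0`). -/
noncomputable def gram {d : ℕ} (G0 : Matrix (Fin d) (Fin d) ℝ) (x : ℕ → Fin d → ℝ) (j : ℕ) :
    Matrix (Fin d) (Fin d) ℝ :=
  G0 + ∑ i ∈ Finset.range j, vecMulVec (x i) (x i)

/-!
By the matrix determinant lemma, `det V_{j+1} = det V_j * (1 + u_j)` with
`u_j = x_jᵀ V_j⁻¹ x_j ≥ 0`, so `log det V_n = Σ_j log (1 + u_j)` telescopes, and termwise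
`min 1 u ≤ 2 log (1 + u)`. For the second inequality, AM–GM on the eigenvalues of `V_n` gives
`det V_n ≤ (tr V_n / d) ^ d`, and `tr V_n = d + Σ_j ‖x_j‖² ≤ d + n ≤ d (1 + n)`.
-/

theorem Matrix.det_add_vecMulVec {m α : Type*} [Fintype m] [DecidableEq m] [CommRing α]
    {A : Matrix m m α} (hA : IsUnit A.det) (u v : m → α) :
    (A + vecMulVec u v).det = A.det * (1 + v ⬝ᵥ A⁻¹ *ᵥ u) := by
  rw [vecMulVec_eq Unit, det_add_replicateCol_mul_replicateRow hA, Matrix.mul_assoc,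
    ← replicateCol_mulVec, det_unique (1 + _)]
  simp [replicateRow_mul_replicateCol_apply]

theorem Real.prod_le_sum_div_card_pow {ι : Type*} [Fintype ι] {z : ι → ℝ}
    (hz : ∀ i, 0 ≤ z i) : ∏ i, z i ≤ ((∑ i, z i) / Fintype.card ι) ^ Fintype.card ι := by
  rcases isEmpty_or_nonempty ι with hι | hι
  · simp
  have hcard : Fintype.card ι ≠ 0 := Fintype.card_ne_zero
  have amgm := Real.geom_mean_le_arith_mean Finset.univ (fun _ ↦ 1) z (fun _ _ ↦ zero_le_one)
    (by simpa using Nat.pos_of_ne_zero hcard) (fun i _ ↦ hz i)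
  simp only [Real.rpow_one, Finset.sum_const, Finset.card_univ, nsmul_eq_mul, mul_one,
    one_mul] at amgm
  have hprod : 0 ≤ ∏ i, z i := Finset.prod_nonneg fun i _ ↦ hz i
  calc ∏ i, z i = ((∏ i, z i) ^ ((Fintype.card ι : ℝ)⁻¹)) ^ Fintype.card ι :=
        (Real.rpow_inv_natCast_pow hprod hcard).symm
    _ ≤ _ := pow_le_pow_left₀ (Real.rpow_nonneg hprod _) amgm _

theorem Matrix.PosSemidef.det_le_trace_div_card_pow {n : Type*} [Fintype n] [DecidableEq n]
    {A : Matrix n n ℝ} (hA : A.PosSemidef) :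
    A.det ≤ (A.trace / Fintype.card n) ^ Fintype.card n := by
  rw [hA.1.det_eq_prod_eigenvalues, hA.1.trace_eq_sum_eigenvalues]
  exact Real.prod_le_sum_div_card_pow hA.eigenvalues_nonneg

theorem Real.min_one_le_two_mul_log_one_add {u : ℝ} (hu : 0 ≤ u) :
    min 1 u ≤ 2 * Real.log (1 + u) := by
  have hlog := Real.one_sub_inv_le_log_of_pos (x := 1 + u) (by positivity)
  suffices min 1 u ≤ 2 * (1 - (1 + u)⁻¹) by linarith
  have hinv : 1 - (1 + u)⁻¹ = u / (1 + u) := by field_simp; ring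
  rw [hinv, mul_div_assoc', le_div_iff₀ (by positivity)]
  rcases le_total u 1 with h | h
  · rw [min_eq_right h]; nlinarith
  · rw [min_eq_left h]; linarith

section gram

variable {d : ℕ} {G0 : Matrix (Fin d) (Fin d) ℝ} (x : ℕ → Fin d → ℝ)

theorem gram_zero : gram G0 x 0 = G0 := by
  simp [_root_.gram]

theorem gram_succ (j : ℕ) :
    gram G0 x (j + 1) = gram G0 x j + vecMulVec (x j) (x j) := by
  rw [_root_.gram, _root_.gram, Finset.sum_range_succ, add_assoc]

theorem trace_gram (n : ℕ) :
    (gram G0 x n).trace = G0.trace + ∑ j ∈ Finset.range n, x j ⬝ᵥ x j := by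
  simp [_root_.gram, trace_add, trace_sum, trace_vecMulVec]

variable (hG0 : G0.PosDef)
include hG0

theorem posDef_gram (j : ℕ) : (gram G0 x j).PosDef :=
  hG0.add_posSemidef <| posSemidef_sum _ fun i _ ↦ by
    simpa using posSemidef_vecMulVec_self_star (x i)

theorem dotProduct_inv_gram_mulVec_nonneg (j : ℕ) :
    0 ≤ x j ⬝ᵥ (gram G0 x j)⁻¹ *ᵥ x j := by
  simpa using (posDef_gram x hG0 j).posSemidef.inv.dotProduct_mulVec_nonneg (x j)

theorem log_det_gram (n : ℕ) :
    Real.log (gram G0 x n).det = Real.log G0.det +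
      ∑ j ∈ Finset.range n, Real.log (1 + x j ⬝ᵥ (gram G0 x j)⁻¹ *ᵥ x j) := by
  induction n with
  | zero => simp [gram_zero]
  | succ j ih =>
    have hdet := (posDef_gram x hG0 j).det_pos
    have hu := dotProduct_inv_gram_mulVec_nonneg x hG0 j
    rw [gram_succ, det_add_vecMulVec hdet.ne'.isUnit, Real.log_mul hdet.ne' (by linarith), ih,
      Finset.sum_range_succ, add_assoc]

theorem sum_min_one_le_two_mul_log_det_gram (n : ℕ) :
    ∑ j ∈ Finset.range n, min 1 (x j ⬝ᵥ (gram G0 x j)⁻¹ *ᵥ x j) ≤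
      2 * (Real.log (gram G0 x n).det - Real.log G0.det) := by
  rw [log_det_gram x hG0, add_sub_cancel_left, Finset.mul_sum]
  exact Finset.sum_le_sum fun j _ ↦
    Real.min_one_le_two_mul_log_one_add (dotProduct_inv_gram_mulVec_nonneg x hG0 j)

end gram

theorem det_gram_one_le {d n : ℕ} (hd : 1 ≤ d) (x : ℕ → Fin d → ℝ)
    (hx : ∀ j < n, x j ⬝ᵥ x j ≤ 1) : (gram 1 x n).det ≤ (1 + n) ^ d := by
  have hV := (posDef_gram x PosDef.one n).posSemidef
  have hsq : ∑ j ∈ Finset.range n, x j ⬝ᵥ x j ≤ n := by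
    simpa using Finset.sum_le_card_nsmul _ _ 1 fun j hj ↦ hx j (Finset.mem_range.mp hj)
  have htr : (gram 1 x n).trace / d ≤ 1 + n := by
    have hd' : (1 : ℝ) ≤ d := by exact_mod_cast hd
    rw [trace_gram, trace_one, Fintype.card_fin, div_le_iff₀ (by positivity)]
    nlinarith [n.cast_nonneg (α := ℝ)]
  have hamgm := hV.det_le_trace_div_card_pow
  rw [Fintype.card_fin] at hamgm
  exact hamgm.trans (pow_le_pow_left₀ (div_nonneg hV.trace_nonneg d.cast_nonneg) htr d)

theorem stmt_4_general {d n : ℕ} (hd : 1 ≤ d)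
    (x : ℕ → Fin d → ℝ) (hx : ∀ j < n, euclNorm (x j) ≤ 1) :
    (∑ j ∈ Finset.range n, min 1 (x j ⬝ᵥ (gram 1 x j)⁻¹.mulVec (x j))) ≤
        2 * Real.log (gram 1 x n).det ∧
      2 * Real.log (gram 1 x n).det ≤ 2 * d * Real.log (1 + n) := by
  constructor
  · simpa using sum_min_one_le_two_mul_log_det_gram x PosDef.one n
  · have hdet := det_gram_one_le hd x fun j hj ↦ Real.sqrt_le_one.mp (hx j hj)
    have hlog := Real.log_le_log (posDef_gram x PosDef.one n).det_pos hdet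
    rw [Real.log_pow] at hlog
    linarith

/-- Elliptical potential with identity base:
`Σ_{j=1}^n min{1, x_jᵀ V_{j-1}⁻¹ x_j} ≤ 2 log det V_n ≤ 2 d log(1+n)`. -/
theorem stmt_4 {d n : ℕ} (hd : 1 ≤ d) (hn : 1 ≤ n)
    (x : ℕ → Fin d → ℝ) (hx : ∀ j < n, euclNorm (x j) ≤ 1) :
    (∑ j ∈ Finset.range n, min 1 (x j ⬝ᵥ (gram 1 x j)⁻¹.mulVec (x j))) ≤
        2 * Real.log (gram 1 x n).det ∧
      2 * Real.log (gram 1 x n).det ≤ 2 * d * Real.log (1 + n) :=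
  stmt_4_general hd x hx
end

section
/- Let G be a symmetric positive definite d×d real matrix with eigenvalues g_1, …, g_d > 0, let B ≥ 0, and define Φ_G(B) := sup{ Σ_{j=1}^d log(1 + a_j/g_j) : a_1, …, a_d ≥ 0, Σ_{j=1}^d a_j ≤ B }. Then for every symmetric positive semidefinite d×d real matrix A with trace(A) ≤ B, one has log( det(A + G) / det(G) ) ≤ Φ_G(B). -/
/-!
Conjugating by the orthogonal `U` replaces `G` by `diag g` and `A` by `M = UᵀAU`, which has the
same trace and nonnegative diagonal. Hadamard's inequality `det (M + diag g) ≤ ∏ (M_jj + g_j)`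
(read off the LDL decomposition) then bounds the log-ratio by `∑ log (1 + M_jj / g_j)`, and
`a_j = M_jj` is an admissible allocation in the envelope.
-/

open Matrix

/-- The water-filling information envelope at budget `B` for base spectrum `g`:
`Φ_g(B) := sup { Σ_j log(1 + a_j/g_j) : a_j ≥ 0, Σ_j a_j ≤ B }`. -/
noncomputable def waterfill {d : ℕ} (g : Fin d → ℝ) (B : ℝ) : ℝ :=
  sSup {r : ℝ | ∃ a : Fin d → ℝ,
    (∀ j, 0 ≤ a j) ∧ (∑ j, a j) ≤ B ∧ r = ∑ j, Real.log (1 + a j / g j)}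

namespace Matrix

variable {n : Type*} [Fintype n]

theorem PosDef.det_le_prod_diag [LinearOrder n] [LocallyFiniteOrderBot n]
    {M : Matrix n n ℝ} (hM : M.PosDef) : M.det ≤ ∏ i, M i i := by
  set L := LDL.lower hM
  set e := LDL.diagEntries hM
  have hLDL : L * diagonal e * Lᴴ = M := LDL.lower_conj_diag hM
  have he : ∀ i, 0 ≤ e i := by
    have : (diagonal e).PosSemidef := by
      rw [show diagonal e = LDL.diag hM from rfl, LDL.diag_eq_lowerInv_conj]
      exact hM.posSemidef.mul_mul_conjTranspose_same _
    exact posSemidef_diagonal_iff.mp this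
  have hL : L.IsLowerTriangular :=
    blockTriangular_inv_of_blockTriangular fun _ _ h => LDL.lowerInv_triangular hM h
  have hdiag : ∀ i, M i i = ∑ k, e k * L i k ^ 2 := fun i => by
    rw [← hLDL, mul_apply]
    simp only [mul_diagonal, conjTranspose_apply, star_trivial]
    exact Finset.sum_congr rfl fun k _ => by ring
  have hdet : M.det = ∏ i, e i * L i i ^ 2 := by
    rw [← hLDL, det_mul, det_mul, det_diagonal, det_conjTranspose, star_trivial,
      det_of_isLowerTriangular L hL, ← Finset.prod_mul_distrib, ← Finset.prod_mul_distrib]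
    exact Finset.prod_congr rfl fun i _ => by ring
  rw [hdet]
  refine Finset.prod_le_prod (fun i _ => mul_nonneg (he i) (sq_nonneg _)) fun i _ => hdiag i ▸ ?_
  exact Finset.single_le_sum (f := fun k => e k * L i k ^ 2)
    (fun k _ => mul_nonneg (he k) (sq_nonneg _)) (Finset.mem_univ i)

theorem PosSemidef.det_add_diagonal_le [LinearOrder n] [LocallyFiniteOrderBot n]
    {M : Matrix n n ℝ} (hM : M.PosSemidef) {g : n → ℝ} (hg : ∀ j, 0 < g j) :
    (M + diagonal g).det ≤ ∏ j, (M j j + g j) := by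
  simpa [add_apply] using (PosDef.posSemidef_add hM (PosDef.diagonal hg)).det_le_prod_diag

theorem PosSemidef.log_det_add_diagonal_div_le [LinearOrder n] [LocallyFiniteOrderBot n]
    {M : Matrix n n ℝ} (hM : M.PosSemidef) {g : n → ℝ} (hg : ∀ j, 0 < g j) :
    Real.log ((M + diagonal g).det / ∏ j, g j) ≤ ∑ j, Real.log (1 + M j j / g j) := by
  have hprod : 0 < ∏ j, g j := Finset.prod_pos fun j _ => hg j
  have hsum : ∑ j, Real.log (1 + M j j / g j) = Real.log ((∏ j, (M j j + g j)) / ∏ j, g j) := by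
    rw [← Finset.prod_div_distrib, Real.log_prod fun j _ => by
      have := hM.diag_nonneg (i := j); have := hg j; positivity]
    exact Finset.sum_congr rfl fun j _ => by rw [add_div, div_self (hg j).ne', add_comm]
  rw [hsum]
  exact Real.log_le_log (div_pos (PosDef.posSemidef_add hM (PosDef.diagonal hg)).det_pos hprod)
    (div_le_div_of_nonneg_right (hM.det_add_diagonal_le hg) hprod.le)

theorem det_mul_mul_transpose_of_transpose_mul_self [DecidableEq n] {U : Matrix n n ℝ}
    (hU : Uᵀ * U = 1) (X : Matrix n n ℝ) : (U * X * Uᵀ).det = X.det := by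
  have hdetU := congrArg det hU
  rw [det_mul, det_transpose, det_one] at hdetU
  rw [det_mul, det_mul, det_transpose]
  linear_combination X.det * hdetU

end Matrix

theorem le_waterfill {d : ℕ} {g : Fin d → ℝ} (hg : ∀ j, 0 < g j) {B : ℝ} {a : Fin d → ℝ}
    (ha : ∀ j, 0 ≤ a j) (haB : ∑ j, a j ≤ B) :
    ∑ j, Real.log (1 + a j / g j) ≤ waterfill g B := by
  refine le_csSup ⟨∑ j, Real.log (1 + B / g j), ?_⟩ ⟨a, ha, haB, rfl⟩
  rintro _ ⟨b, hb, hbB, rfl⟩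
  refine Finset.sum_le_sum fun j _ => ?_
  have hbj : b j ≤ B := (Finset.single_le_sum (fun k _ => hb k) (Finset.mem_univ j)).trans hbB
  have := hg j
  have := hb j
  exact Real.log_le_log (by positivity) (by gcongr)

theorem stmt_17_general {d : ℕ}
    (G U : Matrix (Fin d) (Fin d) ℝ) (g : Fin d → ℝ)
    (hU : Uᵀ * U = 1) (hg : ∀ j, 0 < g j)
    (hGdecomp : G = U * Matrix.diagonal g * Uᵀ)
    (B : ℝ)
    (A : Matrix (Fin d) (Fin d) ℝ) (hA : A.PosSemidef) (htr : A.trace ≤ B) :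
    Real.log ((A + G).det / G.det) ≤ waterfill g B := by
  set M := Uᵀ * A * U
  have hM : M.PosSemidef := by simpa using hA.conjTranspose_mul_mul_same U
  have hUU : U * Uᵀ = 1 := mul_eq_one_comm.mp hU
  have hAG : A + G = U * (M + diagonal g) * Uᵀ := by
    rw [hGdecomp, Matrix.mul_add, Matrix.add_mul]
    congr 1
    simp only [M, ← Matrix.mul_assoc, hUU, Matrix.one_mul]
    rw [Matrix.mul_assoc, hUU, Matrix.mul_one]
  have htrM : ∑ j, M j j = A.trace := by
    change M.trace = A.trace
    rw [trace_mul_comm, ← Matrix.mul_assoc, hUU, Matrix.one_mul]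
  rw [hAG, hGdecomp, det_mul_mul_transpose_of_transpose_mul_self hU,
    det_mul_mul_transpose_of_transpose_mul_self hU, det_diagonal]
  exact (hM.log_det_add_diagonal_div_le hg).trans
    (le_waterfill hg (fun j => hM.diag_nonneg) (htrM.trans_le htr))

/-- Spectral envelope bound: if `G` has eigenvalues `g_j > 0`
(eigendecomposition `G = U diag(g) Uᵀ` with `U` orthogonal) and `A` is symmetric
positive semidefinite with `trace(A) ≤ B`, then
`log(det(A+G)/det G) ≤ Φ_G(B)`. -/
theorem stmt_17 {d : ℕ} (hd : 1 ≤ d)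
    (G U : Matrix (Fin d) (Fin d) ℝ) (g : Fin d → ℝ)
    (hG : G.PosDef) (hU : Uᵀ * U = 1) (hg : ∀ j, 0 < g j)
    (hGdecomp : G = U * Matrix.diagonal g * Uᵀ)
    (B : ℝ) (hB : 0 ≤ B)
    (A : Matrix (Fin d) (Fin d) ℝ) (hA : A.PosSemidef) (htr : A.trace ≤ B) :
    Real.log ((A + G).det / G.det) ≤ waterfill g B :=
  stmt_17_general G U g hU hg hGdecomp B A hA htr
end
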